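/- If K₁ and K₂ are both delay-insensitive and controllable sublanguages of M_G, then K₁ ∪ K₂ is delay-insensitive and controllable; hence the class CD(L) of controllable and delay-insensitive sublanguages of any language L is closed under (finite and arbitrary) union, and the supremal element sup CD(L) exists. -/

import Mathlib

/-- The prefix-closure of a language. -/
def prefixClosure {α : Type*} (K : Set (List α)) : Set (List α) :=
  {t | ∃ w ∈ K, t <+: w}

/-- Delay closure swapping adjacent `σ' σ` (`σ' ∈ Sc`, `σ ∈ Su`) into `σ σ'`. -/
inductive Delay {α : Type*} (Sc Su : Set α) (L : Set (List α)) : List α → Prop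
  | base {w : List α} : w ∈ L → Delay Sc Su L w
  | swap {s t : List α} {σ' σ : α} :
      Delay Sc Su L (s ++ σ' :: σ :: t) → σ' ∈ Sc → σ ∈ Su →
      Delay Sc Su L (s ++ σ :: σ' :: t)

/-- `K` is controllable w.r.t. plant `MG`: `K̄ Σ_u ∩ M_G ⊆ K̄`. -/
def Controllable {α : Type*} (MG : Set (List α)) (Su : Set α) (K : Set (List α)) : Prop :=
  ∀ s ∈ prefixClosure K, ∀ σ ∈ Su, s ++ [σ] ∈ MG → s ++ [σ] ∈ prefixClosure K

/-- `K` is delay-insensitive: `delay[Σ_c](K̄) ∩ M_G ⊆ K̄`. -/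
def DelayInsensitive {α : Type*} (MG : Set (List α)) (Sc Su : Set α)
    (K : Set (List α)) : Prop :=
  ∀ w : List α, Delay Sc Su (prefixClosure K) w → w ∈ MG → w ∈ prefixClosure K

/-- `CD(L)`: controllable and delay-insensitive sublanguages of `L`. -/
def CD {α : Type*} (MG : Set (List α)) (Sc Su : Set α) (L : Set (List α)) :
    Set (Set (List α)) :=
  {K | K ⊆ L ∧ Controllable MG Su K ∧ DelayInsensitive MG Sc Su K}

/-!
Prefix closure commutes with unions, and a word of `delay[Σ_c](⋃ K̄ᵢ)` is obtained by swaps from a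
single word, hence already lies in some `delay[Σ_c](K̄ᵢ)`. So every instance of the controllability
or delay-insensitivity condition for `⋃ Kᵢ` is an instance of the condition for one `Kᵢ`. The
supremal element of `CD(L)` is then the union of all its members.
-/

section

variable {α : Type*} {MG : Set (List α)} {Sc Su : Set α} {ι : Sort*}

theorem prefixClosure_iUnion (K : ι → Set (List α)) :
    prefixClosure (⋃ i, K i) = ⋃ i, prefixClosure (K i) := by
  ext t
  simp only [prefixClosure, Set.mem_iUnion, Set.mem_ofPred_eq]
  exact ⟨fun ⟨w, ⟨i, hw⟩, ht⟩ => ⟨i, w, hw, ht⟩, fun ⟨i, w, hw, ht⟩ => ⟨w, ⟨i, hw⟩, ht⟩⟩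

theorem Delay.exists_of_iUnion {A : ι → Set (List α)} {w : List α}
    (h : Delay Sc Su (⋃ i, A i) w) : ∃ i, Delay Sc Su (A i) w := by
  induction h with
  | base hw =>
    obtain ⟨i, hi⟩ := Set.mem_iUnion.mp hw
    exact ⟨i, .base hi⟩
  | swap _ hc hu ih =>
    obtain ⟨i, hi⟩ := ih
    exact ⟨i, .swap hi hc hu⟩

theorem Controllable.iUnion {K : ι → Set (List α)} (h : ∀ i, Controllable MG Su (K i)) :
    Controllable MG Su (⋃ i, K i) := by
  intro s hs σ hσ hsσ
  rw [prefixClosure_iUnion] at hs ⊢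
  obtain ⟨i, hi⟩ := Set.mem_iUnion.mp hs
  exact Set.mem_iUnion.mpr ⟨i, h i s hi σ hσ hsσ⟩

theorem DelayInsensitive.iUnion {K : ι → Set (List α)}
    (h : ∀ i, DelayInsensitive MG Sc Su (K i)) : DelayInsensitive MG Sc Su (⋃ i, K i) := by
  intro w hw hwMG
  rw [prefixClosure_iUnion] at hw ⊢
  obtain ⟨i, hi⟩ := hw.exists_of_iUnion
  exact Set.mem_iUnion.mpr ⟨i, h i w hi hwMG⟩

theorem Controllable.union {K₁ K₂ : Set (List α)} (h₁ : Controllable MG Su K₁)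
    (h₂ : Controllable MG Su K₂) : Controllable MG Su (K₁ ∪ K₂) :=
  Set.union_eq_iUnion ▸ Controllable.iUnion (Bool.forall_bool.mpr ⟨h₂, h₁⟩)

theorem DelayInsensitive.union {K₁ K₂ : Set (List α)} (h₁ : DelayInsensitive MG Sc Su K₁)
    (h₂ : DelayInsensitive MG Sc Su K₂) : DelayInsensitive MG Sc Su (K₁ ∪ K₂) :=
  Set.union_eq_iUnion ▸ DelayInsensitive.iUnion (Bool.forall_bool.mpr ⟨h₂, h₁⟩)

theorem iUnion_mem_CD {L : Set (List α)} {K : ι → Set (List α)}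
    (h : ∀ i, K i ∈ CD MG Sc Su L) : ⋃ i, K i ∈ CD MG Sc Su L :=
  ⟨Set.iUnion_subset fun i => (h i).1, Controllable.iUnion fun i => (h i).2.1,
    DelayInsensitive.iUnion fun i => (h i).2.2⟩

theorem sUnion_CD_mem_CD (L : Set (List α)) : ⋃₀ CD MG Sc Su L ∈ CD MG Sc Su L :=
  Set.sUnion_eq_iUnion ▸ iUnion_mem_CD fun K => K.2

end

theorem CD_closed_under_union_and_supremal_general {α : Type*} (MG : Set (List α))
    (Sc Su : Set α) :
    (∀ K₁ K₂ : Set (List α), K₁ ⊆ MG → K₂ ⊆ MG →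
      Controllable MG Su K₁ → DelayInsensitive MG Sc Su K₁ →
      Controllable MG Su K₂ → DelayInsensitive MG Sc Su K₂ →
      Controllable MG Su (K₁ ∪ K₂) ∧ DelayInsensitive MG Sc Su (K₁ ∪ K₂)) ∧
    (∀ (L : Set (List α)) (ι : Type) (K : ι → Set (List α)),
      (∀ i, K i ∈ CD MG Sc Su L) → (⋃ i, K i) ∈ CD MG Sc Su L) ∧
    (∀ L : Set (List α), ∃ S ∈ CD MG Sc Su L, ∀ K ∈ CD MG Sc Su L, K ⊆ S) :=
  ⟨fun _ _ _ _ hc₁ hd₁ hc₂ hd₂ => ⟨hc₁.union hc₂, hd₁.union hd₂⟩,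
    fun _ _ _ => iUnion_mem_CD,
    fun L => ⟨⋃₀ CD MG Sc Su L, sUnion_CD_mem_CD L, fun _ => Set.subset_sUnion_of_mem⟩⟩

/-- Controllable delay-insensitive sublanguages are closed under binary and
arbitrary unions, and the supremal element `sup CD(L)` exists. -/
theorem CD_closed_under_union_and_supremal {α : Type*} (MG : Set (List α))
    (Sc Su : Set α) (hMGpc : ∀ s ∈ MG, ∀ t : List α, t <+: s → t ∈ MG) :
    (∀ K₁ K₂ : Set (List α), K₁ ⊆ MG → K₂ ⊆ MG →
      Controllable MG Su K₁ → DelayInsensitive MG Sc Su K₁ →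
      Controllable MG Su K₂ → DelayInsensitive MG Sc Su K₂ →
      Controllable MG Su (K₁ ∪ K₂) ∧ DelayInsensitive MG Sc Su (K₁ ∪ K₂)) ∧
    (∀ (L : Set (List α)) (ι : Type) (K : ι → Set (List α)),
      (∀ i, K i ∈ CD MG Sc Su L) → (⋃ i, K i) ∈ CD MG Sc Su L) ∧
    (∀ L : Set (List α), ∃ S ∈ CD MG Sc Su L, ∀ K ∈ CD MG Sc Su L, K ⊆ S) :=
  CD_closed_under_union_and_supremal_general MG Sc Su
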